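/- arXiv:1105.2202 — 2 statements merged into one kernel-verified Lean document; each statement's English description precedes it below -/
import Mathlib

section
/- For every graph G on n vertices, I(G ∘ 2K₁; x) = (1+x)^{2n} · I(G; x/(1+x)²), as an identity of polynomials. -/
/-!
An independent set of `G ∘ H` consists of an independent set `A` of `G` together with, for every
vertex `v ∉ A`, an independent set of the copy of `H` hanging at `v` (the copies at vertices of
`A` must stay empty). Summing `X ^ size` over such choices factorises into
`I(G ∘ H) = ∑_{A indep} X ^ |A| * I(H) ^ (n - |A|)`, and `I(2K₁) = (1 + X) ^ 2`.
-/

open Polynomial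

open scoped Classical in
/-- The independence polynomial of a finite simple graph. -/
noncomputable def indepPoly {V : Type*} [Fintype V] (G : SimpleGraph V) : Polynomial ℤ :=
  ∑ s : Finset V, if (s : Set V).Pairwise (fun u v => ¬ G.Adj u v) then X ^ s.card else 0

/-- Corona of two graphs. -/
def corona {V W : Type*} (G : SimpleGraph V) (H : SimpleGraph W) : SimpleGraph (V ⊕ V × W) where
  Adj x y :=
    match x, y with
    | .inl u, .inl v => G.Adj u v
    | .inl u, .inr (v, _) => u = v
    | .inr (v, _), .inl u => u = v
    | .inr (u, a), .inr (v, b) => u = v ∧ H.Adj a b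
  symm := ⟨by
    rintro (u | ⟨u, a⟩) (v | ⟨v, b⟩) h
    · exact G.adj_symm h
    · exact h
    · exact h
    · exact ⟨h.1.symm, h.2.symm⟩⟩
  loopless := ⟨by
    rintro (u | ⟨u, a⟩) h
    · exact G.irrefl h
    · exact H.irrefl h.2⟩

open Finset

namespace Finset

variable {α β : Type*} [Fintype α] [Fintype β] [DecidableEq α] [DecidableEq β]

def prodEquivPi : Finset (α × β) ≃ (α → Finset β) where
  toFun s a := {b | (a, b) ∈ s}
  invFun g := {p | p.2 ∈ g p.1}
  left_inv s := by ext; simp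
  right_inv g := by ext; simp

theorem mem_prodEquivPi_symm {g : α → Finset β} {a : α} {b : β} :
    (a, b) ∈ prodEquivPi.symm g ↔ b ∈ g a := by
  simp [prodEquivPi]

theorem card_eq_sum_card_prodEquivPi (s : Finset (α × β)) :
    #s = ∑ a, #(prodEquivPi s a) :=
  calc #s = ∑ p, if p ∈ s then 1 else 0 := by simp
    _ = ∑ a, ∑ b, if (a, b) ∈ s then 1 else 0 := Fintype.sum_prod_type _
    _ = ∑ a, #(prodEquivPi s a) := by simp only [prodEquivPi, Equiv.coe_fn_mk, card_filter]

end Finset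

theorem Fintype.prod_sum_ite {ι κ R : Type*} [Fintype ι] [DecidableEq ι] [Fintype κ]
    [CommSemiring R] (p : ι → κ → Prop) [∀ i, DecidablePred (p i)] (f : ι → κ → R) :
    ∏ i, ∑ k, (if p i k then f i k else 0) =
      ∑ g : ι → κ, if ∀ i, p i (g i) then ∏ i, f i (g i) else 0 := by
  simp only [Fintype.prod_sum, Fintype.prod_ite_zero]

theorem Polynomial.sum_range_coeff_sum_X_pow_mul {R ι : Type*} [CommSemiring R] (s : Finset ι)
    (d : ι → ℕ) {n : ℕ} (hd : ∀ i ∈ s, d i ≤ n) (q : R[X]) :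
    ∑ k ∈ range (n + 1), C ((∑ i ∈ s, X ^ d i : R[X]).coeff k) * X ^ k * q ^ (n - k) =
      ∑ i ∈ s, X ^ d i * q ^ (n - d i) := by
  simp only [finsetSum_coeff, coeff_X_pow, map_sum, sum_mul]
  rw [sum_comm]
  refine sum_congr rfl fun i hi ↦ ?_
  simp only [apply_ite C, map_one, map_zero, ite_mul, one_mul, zero_mul]
  rw [sum_ite_eq', if_pos (mem_range.2 (Nat.lt_succ_of_le (hd i hi)))]

section IndepPoly

variable {V W : Type*}

open scoped Classical in
theorem indepPoly_eq_sum_filter [Fintype V] (G : SimpleGraph V) :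
    indepPoly G = ∑ A ∈ univ.filter fun A : Finset V ↦ G.IsIndepSet ↑A, X ^ #A :=
  (sum_filter _ _).symm

theorem indepPoly_bot [Fintype W] :
    indepPoly (⊥ : SimpleGraph W) = (1 + X) ^ Fintype.card W := by
  calc indepPoly (⊥ : SimpleGraph W) = ∑ t : Finset W, X ^ #t := by
        simp [indepPoly, Set.Pairwise]
    _ = (X + 1) ^ Fintype.card W := by
        simpa using sum_pow_mul_eq_add_pow (X : ℤ[X]) 1 (univ : Finset W)
    _ = (1 + X) ^ Fintype.card W := by rw [add_comm]

open scoped Classical in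
theorem sum_isIndepSet_and_imp_eq_empty [Fintype W] (H : SimpleGraph W) (P : Prop)
    [Decidable P] :
    ∑ t : Finset W, (if (P → t = ∅) ∧ H.IsIndepSet ↑t then X ^ #t else 0) =
      if P then 1 else indepPoly H := by
  by_cases hP : P <;> simp [hP, indepPoly, ite_and]

theorem corona_isIndepSet_iff (G : SimpleGraph V) (H : SimpleGraph W) (S : Set (V ⊕ V × W)) :
    (corona G H).IsIndepSet S ↔
      G.IsIndepSet (Sum.inl ⁻¹' S) ∧
        ∀ v, (.inl v ∈ S → ∀ w, .inr (v, w) ∉ S) ∧ H.IsIndepSet {w | .inr (v, w) ∈ S} := by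
  constructor
  · intro h
    refine ⟨fun u hu v hv huv ↦ h hu hv (by simpa using huv), fun v ↦ ⟨?_, ?_⟩⟩
    · exact fun hv w hw ↦ h hv hw Sum.inl_ne_inr rfl
    · exact fun a ha b hb hab ↦ h ha hb (by simpa using hab) ∘ And.intro rfl
  · rintro ⟨hG, hH⟩ (u | ⟨u, a⟩) hx (v | ⟨v, b⟩) hy hne hadj
    · exact hG hx hy (by simpa using hne) hadj
    · exact (hH v).1 (hadj ▸ hx) b hy
    · exact (hH u).1 (hadj ▸ hy) a hx
    · obtain ⟨rfl, hab⟩ := hadj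
      exact (hH u).2 hx hy (by simpa using hne) hab

theorem corona_isIndepSet_disjSum_iff [Fintype V] [Fintype W] [DecidableEq V] [DecidableEq W]
    (G : SimpleGraph V) (H : SimpleGraph W) (A : Finset V) (g : V → Finset W) :
    (corona G H).IsIndepSet ↑(A.disjSum (prodEquivPi.symm g)) ↔
      G.IsIndepSet ↑A ∧ ∀ v, (v ∈ A → g v = ∅) ∧ H.IsIndepSet ↑(g v) := by
  have hA : Sum.inl ⁻¹' (↑(A.disjSum (prodEquivPi.symm g)) : Set (V ⊕ V × W)) = ↑A := by
    ext; simp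
  simp [corona_isIndepSet_iff, hA, mem_prodEquivPi_symm, eq_empty_iff_forall_notMem]

open scoped Classical in
theorem indepPoly_corona [Fintype V] [Fintype W] (G : SimpleGraph V) (H : SimpleGraph W) :
    indepPoly (corona G H) =
      ∑ A ∈ univ.filter fun A : Finset V ↦ G.IsIndepSet ↑A,
        X ^ #A * indepPoly H ^ (Fintype.card V - #A) := by
  let e : Finset (V ⊕ V × W) ≃ Finset V × (V → Finset W) :=
    sumEquiv.toEquiv.trans ((Equiv.refl _).prodCongr prodEquivPi)
  rw [indepPoly, ← e.symm.sum_comp, Fintype.sum_prod_type, sum_filter]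
  refine sum_congr rfl fun A _ ↦ ?_
  calc _ = ∑ g : V → Finset W,
          if G.IsIndepSet ↑A ∧ ∀ v, (v ∈ A → g v = ∅) ∧ H.IsIndepSet ↑(g v)
          then X ^ #A * ∏ v, X ^ #(g v) else 0 := by
        refine sum_congr rfl fun g _ ↦ ?_
        have he : e.symm (A, g) = A.disjSum (prodEquivPi.symm g) := rfl
        have hcard : #(A.disjSum (prodEquivPi.symm g)) = #A + ∑ v, #(g v) := by
          rw [card_disjSum, card_eq_sum_card_prodEquivPi, Equiv.apply_symm_apply]
        simp only [he, hcard, pow_add, prod_pow_eq_pow_sum]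
        exact if_congr (corona_isIndepSet_disjSum_iff G H A g) rfl rfl
    _ = if G.IsIndepSet ↑A then
          X ^ #A * ∏ v, ∑ t : Finset W, if (v ∈ A → t = ∅) ∧ H.IsIndepSet ↑t then X ^ #t else 0
        else 0 := by
        by_cases hA : G.IsIndepSet ↑A
        · rw [if_pos hA, Fintype.prod_sum_ite, mul_sum]
          simp only [hA, true_and, mul_ite, mul_zero]
        · simp [hA]
    _ = _ := by
        simp only [sum_isIndepSet_and_imp_eq_empty]
        simp [prod_ite, filter_not, card_univ_sdiff]

end IndepPoly

theorem corona_two_indepPoly {V : Type*} [Fintype V] (G : SimpleGraph V) :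
    indepPoly (corona G (⊥ : SimpleGraph (Fin 2))) =
      ∑ k ∈ Finset.range (Fintype.card V + 1),
        C ((indepPoly G).coeff k) * X ^ k *
          ((1 + X) ^ 2) ^ (Fintype.card V - k) := by
  rw [indepPoly_corona, indepPoly_bot, Fintype.card_fin, indepPoly_eq_sum_filter G,
    Polynomial.sum_range_coeff_sum_X_pow_mul _ _ fun A _ ↦ card_le_univ A]
end

section
/- If A is a clique in a graph G, then I((G,A) ∘ 2K₁; x) = (1+x)^{2|A|−2} · I((G,A) + 2K₁; x). -/
open Polynomial

/-- Partial corona `(G,A) ∘ H`: each vertex of `A` gets its own copy of `H`. -/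
def partialCorona {V W : Type*} (G : SimpleGraph V) (A : Finset V) (H : SimpleGraph W) :
    SimpleGraph (V ⊕ A × W) where
  Adj x y :=
    match x, y with
    | .inl u, .inl v => G.Adj u v
    | .inl u, .inr (a, _) => u = ↑a
    | .inr (a, _), .inl u => u = ↑a
    | .inr (a, w), .inr (b, w') => a = b ∧ H.Adj w w'
  symm := by
    constructor
    rintro (u | ⟨a, w⟩) (v | ⟨b, w'⟩) h
    · exact G.symm.symm _ _ h
    · exact h
    · exact h
    · exact ⟨h.1.symm, h.2.symm⟩
  loopless := by
    constructor
    rintro (u | ⟨a, w⟩) h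
    · exact G.loopless.irrefl u h
    · exact H.loopless.irrefl w h.2

/-- Partial Zykov sum `(G,A) + H`: every vertex of `A` is joined to every vertex of `H`. -/
def partialZykovSum {V W : Type*} (G : SimpleGraph V) (A : Finset V) (H : SimpleGraph W) :
    SimpleGraph (V ⊕ W) where
  Adj x y :=
    match x, y with
    | .inl u, .inl v => G.Adj u v
    | .inl u, .inr _ => u ∈ A
    | .inr _, .inl u => u ∈ A
    | .inr a, .inr b => H.Adj a b
  symm := by
    constructor
    rintro (u | a) (v | b) h
    · exact G.symm.symm _ _ h
    · exact h
    · exact h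
    · exact H.symm.symm _ _ h
  loopless := by
    constructor
    rintro (u | a) h
    · exact G.loopless.irrefl u h
    · exact H.loopless.irrefl a h

/-! An independent set of either graph splits into its trace `t` on `V`, which must be independent
in `G`, and its part among the new vertices. In the corona the pendant vertices at `A \ t` are
free, contributing `(1 + x) ^ (2 |A \ t|)`; in the Zykov sum the two new vertices are free when `t`
misses `A` and excluded otherwise. As `A` is a clique, `t` meets `A` in at most one vertex, and
both cases give the factor `(1 + x) ^ (2 |A| - 2)`. -/

open Finset SimpleGraph

section

variable {V W : Type*}

open scoped Classical in
lemma indepPoly_sum_eq_sum_disjSum [Fintype V] [Fintype W] (H : SimpleGraph (V ⊕ W)) :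
    indepPoly H = ∑ t : Finset V, ∑ u : Finset W,
      if H.IsIndepSet (t.disjSum u : Set (V ⊕ W)) then X ^ (#t + #u) else 0 := by
  rw [indepPoly, ← Fintype.sum_prod_type', ← sumEquiv.symm.toEquiv.sum_comp]
  simp [card_disjSum, IsIndepSet]

lemma sum_subset_pow_card {α R : Type*} [Fintype α] [DecidableEq α] [CommSemiring R] (x : R)
    (S : Finset α) : (∑ p : Finset α, if p ⊆ S then x ^ #p else 0) = (1 + x) ^ #S := by
  rw [← sum_filter, filter_subset_univ, add_comm, ← sum_pow_mul_eq_add_pow]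
  simp

lemma card_sdiff_eq_card_sub_one_of_isClique_of_isIndepSet [DecidableEq V] {G : SimpleGraph V}
    {A t : Finset V} (hA : G.IsClique (A : Set V)) (ht : G.IsIndepSet (t : Set V))
    (hAt : ¬Disjoint A t) : #(A \ t) = #A - 1 := by
  have hle : #(t ∩ A) ≤ 1 := card_le_one.2 fun u hu v hv => by
    rw [mem_inter] at hu hv
    by_contra huv
    exact ht hu.1 hv.1 huv (hA hu.2 hv.2 huv)
  rw [disjoint_comm, not_disjoint_iff_nonempty_inter] at hAt
  have hpos : 0 < #(t ∩ A) := card_pos.2 hAt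
  rw [card_sdiff]
  omega

variable (G : SimpleGraph V) (A : Finset V)

lemma isIndepSet_partialCorona_bot_disjSum (t : Finset V) (p : Finset (A × W)) :
    (partialCorona G A ⊥).IsIndepSet (t.disjSum p : Set (V ⊕ A × W)) ↔
      G.IsIndepSet (t : Set V) ∧ ∀ x ∈ p, (x.1 : V) ∉ t := by
  simp only [IsIndepSet, Set.Pairwise, SetLike.mem_coe, ne_eq, partialCorona, bot_adj, and_false,
    Sum.forall, inl_mem_disjSum, inr_mem_disjSum, Prod.forall, Subtype.forall, Sum.inl.injEq,
    reduceCtorEq, not_false_eq_true, forall_const, forall_mem_not_eq', Sum.inr.injEq,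
    implies_true, and_true, and_congr_left_iff]
  grind

lemma isIndepSet_partialZykovSum_bot_disjSum (t : Finset V) (q : Finset W) :
    (partialZykovSum G A ⊥).IsIndepSet (t.disjSum q : Set (V ⊕ W)) ↔
      G.IsIndepSet (t : Set V) ∧ (q.Nonempty → Disjoint A t) := by
  simp only [IsIndepSet, Set.Pairwise, SetLike.mem_coe, ne_eq, partialZykovSum, bot_adj,
    Sum.forall, inl_mem_disjSum, inr_mem_disjSum, Sum.inl.injEq, reduceCtorEq, not_false_eq_true,
    forall_const, Sum.inr.injEq, implies_true, and_true]
  grind [Finset.disjoint_left]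

variable [Fintype V] [Fintype W]

open scoped Classical in
lemma indepPoly_partialCorona_bot :
    indepPoly (partialCorona G A (⊥ : SimpleGraph W)) = ∑ t : Finset V,
      if G.IsIndepSet (t : Set V) then X ^ #t * (1 + X) ^ (#(A \ t) * Fintype.card W) else 0 := by
  rw [indepPoly_sum_eq_sum_disjSum]
  refine sum_congr rfl fun t _ => ?_
  simp only [isIndepSet_partialCorona_bot_disjSum]
  split_ifs with ht
  · set S : Finset (A × W) := (A \ t).subtype (· ∈ A) ×ˢ univ
    have hS : #S = #(A \ t) * Fintype.card W := by
      rw [card_product, card_subtype, filter_true_of_mem fun u hu => (mem_sdiff.1 hu).1, card_univ]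
    have hpS (p : Finset (A × W)) : (∀ x ∈ p, (x.1 : V) ∉ t) ↔ p ⊆ S := by
      simp [S, subset_iff]
    simp only [ht, true_and, hpS, pow_add, ← mul_ite_zero, ← mul_sum, sum_subset_pow_card, hS]
  · simp [ht]

open scoped Classical in
lemma indepPoly_partialZykovSum_bot :
    indepPoly (partialZykovSum G A (⊥ : SimpleGraph W)) = ∑ t : Finset V,
      if G.IsIndepSet (t : Set V) then
        X ^ #t * if Disjoint A t then (1 + X) ^ Fintype.card W else 1
      else 0 := by
  rw [indepPoly_sum_eq_sum_disjSum]
  refine sum_congr rfl fun t _ => ?_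
  simp only [isIndepSet_partialZykovSum_bot_disjSum]
  split_ifs with ht hAt
  · simp only [ht, hAt, true_and, imp_true_iff, if_true, pow_add, ← mul_sum]
    rw [← card_univ, ← sum_subset_pow_card]
    simp
  · simp [ht, hAt, not_nonempty_iff_eq_empty]
  · simp [ht]

end

theorem partialCorona_two_indepPoly {V : Type*} [Fintype V]
    (G : SimpleGraph V) (A : Finset V)
    (hA : A.Nonempty) (hclique : G.IsClique (A : Set V)) :
    indepPoly (partialCorona G A (⊥ : SimpleGraph (Fin 2))) =
      (1 + X) ^ (2 * A.card - 2) *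
        indepPoly (partialZykovSum G A (⊥ : SimpleGraph (Fin 2))) := by
  classical
  rw [indepPoly_partialCorona_bot, indepPoly_partialZykovSum_bot, mul_sum]
  refine sum_congr rfl fun t _ => ?_
  have hA2 : 2 * #A - 2 + 2 = #A * 2 := by have := hA.card_pos; omega
  split_ifs with ht hAt
  · rw [sdiff_eq_self_of_disjoint hAt, Fintype.card_fin, ← hA2]
    ring
  · rw [card_sdiff_eq_card_sub_one_of_isClique_of_isIndepSet hclique ht hAt, Fintype.card_fin,
      show (#A - 1) * 2 = 2 * #A - 2 by omega]
    ring
  · simp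
end
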